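/- If $B$ is a random variable taking values in $\{0,1\}$, $T_0, C$ are random variables, and $X, Z$ are random vectors such that $T_0 \perp (C, X) \mid Z$ and $B \perp (C, T_0, Z) \mid X$, then for $T = B T_0 + (1-B) \cdot \infty$ (interpreted via the event $\{T > t\} = \{B = 0\} \cup \{B = 1, T_0 > t\}$), we have $T \perp C \mid (X, Z)$. -/

import Mathlib

/-!
Conditioning on `(X, Z)` sits between conditioning on `X` and on `(X, C, T₀, Z)`. Since
`B ⟂ (C, T₀, Z) ∣ X`, the tower property lets one pull `P(B ∈ U ∣ X)` out of
`E[1{B ∈ U, T₀ ∈ S, C ∈ A} ∣ X, Z]`; in the same way `T₀ ⟂ (C, X) ∣ Z` pulls out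
`P(T₀ ∈ S ∣ Z)`. This factorisation on rectangles gives `(B, T₀) ⟂ C ∣ (X, Z)`, and `T` is a
measurable function of `(B, T₀)`.
-/

open MeasureTheory ProbabilityTheory
open scoped ENNReal

theorem condExp_indicator_preimage_ae_eq_of_condIndepFun
    {Ω β γ δ : Type*} {mΩ : MeasurableSpace Ω} [StandardBorelSpace Ω]
    {mβ : MeasurableSpace β} {mγ : MeasurableSpace γ} {mδ : MeasurableSpace δ}
    [StandardBorelSpace γ] [Nonempty γ] [StandardBorelSpace δ] [Nonempty δ]
    {μ : Measure Ω} [IsFiniteMeasure μ] {f : Ω → β} {g : Ω → γ} {h : Ω → δ}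
    (hf : Measurable f) (hg : Measurable g) (hh : Measurable h)
    (hind : h ⟂ᵢ[f, hf; μ] g) {E : Set δ} (hE : MeasurableSet E) :
    μ⟦h ⁻¹' E | MeasurableSpace.comap (fun ω => (f ω, g ω)) inferInstance⟧
      =ᵐ[μ] μ⟦h ⁻¹' E | mβ.comap f⟧ := by
  have hkernel := (condIndepFun_iff_condDistrib_prod_ae_eq_prodMkRight hh hg hf).1 hind.symm
  filter_upwards [condDistrib_ae_eq_condExp (hf.prodMk hg) hh hE,
    condDistrib_ae_eq_condExp hf hh hE, ae_of_ae_map (hf.prodMk hg).aemeasurable hkernel]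
    with ω h_fg h_f h_eq
  rw [← h_fg, ← h_f, measureReal_def, measureReal_def, h_eq, Kernel.prodMkRight_apply]

theorem indicator_inter_one_eq_mul {Ω : Type*} (W D : Set Ω) :
    (W ∩ D).indicator (fun _ => (1 : ℝ))
      = D.indicator (fun _ => 1) * W.indicator (fun _ => 1) := by
  ext ω
  rw [Set.inter_comm, Pi.mul_apply, ← Set.inter_indicator_mul, one_mul]

theorem condExp_indicator_inter_ae_eq_mul {Ω : Type*} {m m' mΩ : MeasurableSpace Ω}
    {μ : Measure Ω} [IsFiniteMeasure μ] (hmm' : m ≤ m') (hm' : m' ≤ mΩ)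
    {W D : Set Ω} (hW : MeasurableSet W) (hD : MeasurableSet[m'] D)
    {w : Ω → ℝ} (hw : StronglyMeasurable[m] w) (hW_eq : μ⟦W | m'⟧ =ᵐ[μ] w) :
    μ⟦W ∩ D | m⟧ =ᵐ[μ] w * μ⟦D | m⟧ := by
  have hD_int : Integrable (D.indicator fun _ => (1 : ℝ)) μ :=
    (integrable_const 1).indicator (hm' _ hD)
  have hW_int : Integrable (W.indicator fun _ => (1 : ℝ)) μ := (integrable_const 1).indicator hW
  have hw_int : Integrable w μ := integrable_condExp.congr hW_eq
  have hDW_int : Integrable (D.indicator (fun _ => (1 : ℝ)) * W.indicator fun _ => 1) μ := by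
    rw [← indicator_inter_one_eq_mul]
    exact (integrable_const 1).indicator (hW.inter (hm' _ hD))
  have hwD_int : Integrable (w * D.indicator fun _ => (1 : ℝ)) μ := by
    rw [show w * D.indicator (fun _ => (1 : ℝ)) = D.indicator w by
      ext ω; by_cases hω : ω ∈ D <;> simp [hω]]
    exact hw_int.indicator (hm' _ hD)
  have hD_meas : StronglyMeasurable[m'] (D.indicator fun _ => (1 : ℝ)) :=
    stronglyMeasurable_const.indicator hD
  calc μ⟦W ∩ D | m⟧
      = μ[D.indicator (fun _ => 1) * W.indicator (fun _ => 1) | m] := by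
        rw [indicator_inter_one_eq_mul]
    _ =ᵐ[μ] μ[μ[D.indicator (fun _ => 1) * W.indicator (fun _ => 1) | m'] | m] :=
        (condExp_condExp_of_le hmm' hm').symm
    _ =ᵐ[μ] μ[w * D.indicator (fun _ => 1) | m] := by
        refine condExp_congr_ae ?_
        filter_upwards [condExp_mul_of_stronglyMeasurable_left hD_meas hDW_int hW_int, hW_eq]
          with ω h_pull h_eq
        rw [h_pull, Pi.mul_apply, h_eq, mul_comm, Pi.mul_apply]
    _ =ᵐ[μ] w * μ⟦D | m⟧ := condExp_mul_of_stronglyMeasurable_left hw hwD_int hD_int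

theorem condIndepFun_prodMk_of_forall_inter_preimage
    {Ω β γ δ : Type*} {m' mΩ : MeasurableSpace Ω} [StandardBorelSpace Ω] {hm' : m' ≤ mΩ}
    {μ : Measure Ω} [IsFiniteMeasure μ]
    {mβ : MeasurableSpace β} {mγ : MeasurableSpace γ} {mδ : MeasurableSpace δ}
    {f : Ω → β} {g : Ω → γ} {k : Ω → δ} (hf : Measurable f) (hg : Measurable g)
    (hk : Measurable k)
    (h : ∀ s t u, MeasurableSet s → MeasurableSet t → MeasurableSet u →
      μ⟦f ⁻¹' s ∩ g ⁻¹' t ∩ k ⁻¹' u | m'⟧ =ᵐ[μ] μ⟦f ⁻¹' s ∩ g ⁻¹' t | m'⟧ * μ⟦k ⁻¹' u | m'⟧) :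
    CondIndepFun m' hm' (fun ω => (f ω, g ω)) k μ := by
  set rectangles : Set (Set Ω) := Set.preimage (fun ω => (f ω, g ω)) ''
    Set.image2 (· ×ˢ ·) {s : Set β | MeasurableSet s} {t : Set γ | MeasurableSet t}
  set events : Set (Set Ω) := Set.preimage k '' {u : Set δ | MeasurableSet u}
  have h_rect : MeasurableSpace.comap (fun ω => (f ω, g ω)) inferInstance
      = MeasurableSpace.generateFrom rectangles := by
    rw [← generateFrom_prod, MeasurableSpace.comap_generateFrom]
  have h_events : MeasurableSpace.comap k mδ = MeasurableSpace.generateFrom events := by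
    rw [← MeasurableSpace.comap_generateFrom, MeasurableSpace.generateFrom_measurableSet]
  rw [condIndepFun_iff_condIndep]
  refine CondIndepSets.condIndep (hf.prodMk hg).comap_le hk.comap_le
    (isPiSystem_prod.comap _) (MeasurableSpace.isPiSystem_measurableSet.comap k) h_rect h_events ?_
  refine (condIndepSets_iff _ _ _ _ ?_ ?_ μ).2 ?_
  · rintro _ ⟨_, ⟨s, hs, t, ht, rfl⟩, rfl⟩
    exact (hf.prodMk hg) (hs.prod ht)
  · rintro _ ⟨u, hu, rfl⟩
    exact hk hu
  · rintro _ _ ⟨_, ⟨s, hs, t, ht, rfl⟩, rfl⟩ ⟨u, hu, rfl⟩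
    exact h s t u hs ht hu

theorem condExp_indicator_preimage_inter_ae_eq_mul_of_condIndepFun
    {Ω β γ δ : Type*} {mΩ : MeasurableSpace Ω} [StandardBorelSpace Ω]
    {mβ : MeasurableSpace β} {mγ : MeasurableSpace γ} {mδ : MeasurableSpace δ}
    [StandardBorelSpace γ] [Nonempty γ] [StandardBorelSpace δ] [Nonempty δ]
    {μ : Measure Ω} [IsFiniteMeasure μ] {f : Ω → β} {g : Ω → γ} {h : Ω → δ}
    (hf : Measurable f) (hg : Measurable g) (hh : Measurable h) (hind : h ⟂ᵢ[f, hf; μ] g)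
    {m : MeasurableSpace Ω} (hfm : mβ.comap f ≤ m)
    (hm : m ≤ MeasurableSpace.comap (fun ω => (f ω, g ω)) inferInstance)
    {E : Set δ} (hE : MeasurableSet E) {D : Set Ω}
    (hD : MeasurableSet[MeasurableSpace.comap (fun ω => (f ω, g ω)) inferInstance] D) :
    μ⟦h ⁻¹' E ∩ D | m⟧ =ᵐ[μ] μ⟦h ⁻¹' E | mβ.comap f⟧ * μ⟦D | m⟧ :=
  condExp_indicator_inter_ae_eq_mul hm (hf.prodMk hg).comap_le (hh hE) hD
    (stronglyMeasurable_condExp.mono hfm)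
    (condExp_indicator_preimage_ae_eq_of_condIndepFun hf hg hh hind hE)

theorem condIndepFun_prodMk_of_condIndepFun
    {Ω β τ γ ξ ζ : Type*} {mΩ : MeasurableSpace Ω} [StandardBorelSpace Ω]
    {μ : Measure Ω} [IsFiniteMeasure μ]
    [MeasurableSpace β] [StandardBorelSpace β] [Nonempty β]
    [MeasurableSpace τ] [StandardBorelSpace τ] [Nonempty τ]
    [MeasurableSpace γ] [StandardBorelSpace γ] [Nonempty γ]
    [MeasurableSpace ξ] [StandardBorelSpace ξ] [Nonempty ξ]
    [MeasurableSpace ζ] [StandardBorelSpace ζ] [Nonempty ζ]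
    {B : Ω → β} {T₀ : Ω → τ} {C : Ω → γ} {X : Ω → ξ} {Z : Ω → ζ}
    (hB : Measurable B) (hT₀ : Measurable T₀) (hC : Measurable C)
    (hX : Measurable X) (hZ : Measurable Z)
    (hT₀_indep : T₀ ⟂ᵢ[Z, hZ; μ] fun ω => (C ω, X ω))
    (hB_indep : B ⟂ᵢ[X, hX; μ] fun ω => (C ω, T₀ ω, Z ω)) :
    (fun ω => (B ω, T₀ ω)) ⟂ᵢ[fun ω => (X ω, Z ω), hX.prodMk hZ; μ] C := by
  set G := MeasurableSpace.comap (fun ω => (X ω, Z ω)) inferInstance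
  have hX_le : MeasurableSpace.comap X inferInstance ≤ G :=
    (measurable_fst.comp (comap_measurable fun ω => (X ω, Z ω))).comap_le
  have hZ_le : MeasurableSpace.comap Z inferInstance ≤ G :=
    (measurable_snd.comp (comap_measurable fun ω => (X ω, Z ω))).comap_le
  have hG_le_B : G ≤ MeasurableSpace.comap (fun ω => (X ω, C ω, T₀ ω, Z ω)) inferInstance :=
    ((measurable_fst.prodMk measurable_snd.snd.snd).comp
      (comap_measurable fun ω => (X ω, C ω, T₀ ω, Z ω))).comap_le
  have hG_le_T₀ : G ≤ MeasurableSpace.comap (fun ω => (Z ω, C ω, X ω)) inferInstance :=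
    ((measurable_snd.snd.prodMk measurable_fst).comp
      (comap_measurable fun ω => (Z ω, C ω, X ω))).comap_le
  have h_factor : ∀ U S A, MeasurableSet U → MeasurableSet S → MeasurableSet A →
      μ⟦B ⁻¹' U ∩ T₀ ⁻¹' S ∩ C ⁻¹' A | G⟧ =ᵐ[μ]
        μ⟦B ⁻¹' U | MeasurableSpace.comap X inferInstance⟧
          * μ⟦T₀ ⁻¹' S | MeasurableSpace.comap Z inferInstance⟧ * μ⟦C ⁻¹' A | G⟧ := by
    intro U S A hU hS hA
    have hB_pull := condExp_indicator_preimage_inter_ae_eq_mul_of_condIndepFun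
      hX (hC.prodMk (hT₀.prodMk hZ)) hB hB_indep hX_le hG_le_B hU (D := T₀ ⁻¹' S ∩ C ⁻¹' A)
      ((measurable_snd.snd.fst.comp (comap_measurable _) hS).inter
        (measurable_snd.fst.comp (comap_measurable _) hA))
    have hT₀_pull := condExp_indicator_preimage_inter_ae_eq_mul_of_condIndepFun
      hZ (hC.prodMk hX) hT₀ hT₀_indep hZ_le hG_le_T₀ hS (D := C ⁻¹' A)
      (measurable_snd.fst.comp (comap_measurable _) hA)
    rw [Set.inter_assoc]
    filter_upwards [hB_pull, hT₀_pull] with ω h_B h_T₀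
    simp only [Pi.mul_apply] at h_B h_T₀ ⊢
    rw [h_B, h_T₀, mul_assoc]
  refine condIndepFun_prodMk_of_forall_inter_preimage hB hT₀ hC fun U S A hU hS hA => ?_
  have h_marginal := h_factor U S Set.univ hU hS MeasurableSet.univ
  rw [Set.preimage_univ, Set.inter_univ, Set.indicator_univ,
    condExp_const (hX.prodMk hZ).comap_le] at h_marginal
  filter_upwards [h_factor U S A hU hS hA, h_marginal] with ω h_joint h_marg
  simp only [Pi.mul_apply] at h_joint h_marg ⊢
  rw [h_joint, h_marg, mul_one]

theorem cure_model_cond_indep_general {Ω : Type*} [mΩ : MeasurableSpace Ω] [StandardBorelSpace Ω]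
    {p q : ℕ}
    (μ : Measure Ω) [IsProbabilityMeasure μ]
    (B : Ω → ℝ)
    (T0 C : Ω → ℝ≥0∞) (X : Ω → (Fin p → ℝ)) (Z : Ω → (Fin q → ℝ))
    (hB : Measurable B) (hT0 : Measurable T0) (hC : Measurable C)
    (hX : Measurable X) (hZ : Measurable Z)
    (T : Ω → ℝ≥0∞) (hT : ∀ ω, T ω = if B ω = 1 then T0 ω else ∞)
    (h1 : CondIndepFun (MeasurableSpace.comap Z inferInstance) hZ.comap_le
      T0 (fun ω => (C ω, X ω)) μ)
    (h2 : CondIndepFun (MeasurableSpace.comap X inferInstance) hX.comap_le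
      B (fun ω => (C ω, T0 ω, Z ω)) μ) :
    CondIndepFun (MeasurableSpace.comap (fun ω => (X ω, Z ω)) inferInstance)
      ((hX.prodMk hZ).comap_le) T C μ := by
  obtain rfl : T = (fun bt : ℝ × ℝ≥0∞ => if bt.1 = 1 then bt.2 else ∞) ∘ fun ω => (B ω, T0 ω) :=
    funext hT
  exact (condIndepFun_prodMk_of_condIndepFun hB hT0 hC hX hZ h1 h2).comp
    (Measurable.ite (measurable_fst (measurableSet_singleton 1)) measurable_snd measurable_const)
    measurable_id

/-- In the mixture cure model, if `T₀ ⟂ (C, X) ∣ Z` and `B ⟂ (C, T₀, Z) ∣ X`, then the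
survival time `T = B T₀ + (1 - B)·∞` (i.e. `T = T₀` if `B = 1` and `T = ∞` otherwise)
satisfies `T ⟂ C ∣ (X, Z)`. -/
theorem cure_model_cond_indep {Ω : Type*} [mΩ : MeasurableSpace Ω] [StandardBorelSpace Ω]
    [Nonempty Ω] {p q : ℕ}
    (μ : Measure Ω) [IsProbabilityMeasure μ]
    (B : Ω → ℝ) (hBval : ∀ ω, B ω = 0 ∨ B ω = 1)
    (T0 C : Ω → ℝ≥0∞) (X : Ω → (Fin p → ℝ)) (Z : Ω → (Fin q → ℝ))
    (hB : Measurable B) (hT0 : Measurable T0) (hC : Measurable C)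
    (hX : Measurable X) (hZ : Measurable Z)
    (T : Ω → ℝ≥0∞) (hT : ∀ ω, T ω = if B ω = 1 then T0 ω else ∞)
    (h1 : CondIndepFun (MeasurableSpace.comap Z inferInstance) hZ.comap_le
      T0 (fun ω => (C ω, X ω)) μ)
    (h2 : CondIndepFun (MeasurableSpace.comap X inferInstance) hX.comap_le
      B (fun ω => (C ω, T0 ω, Z ω)) μ) :
    CondIndepFun (MeasurableSpace.comap (fun ω => (X ω, Z ω)) inferInstance)
      ((hX.prodMk hZ).comap_le) T C μ :=
  cure_model_cond_indep_general (mΩ := mΩ) μ B T0 C X Z hB hT0 hC hX hZ T hT h1 h2
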